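/- arXiv:1512.07566 — 2 statements merged into one kernel-verified Lean document; each statement's English description precedes it below -/
import Mathlib

section
/- Let A be an N×N real symmetric positive definite matrix, I ⊆ {1,…,N}, and B = A restricted to I×I. Then the matrix C defined by C_{ij} = (A⁻¹)_{ij} − (B⁻¹)_{ij} for i,j ∈ I and C_{ij} = (A⁻¹)_{ij} otherwise, is positive semi-definite. -/
/-! With `J` the `N × s` matrix of coordinate inclusions, `B = Jᴴ A J` and `P = J B⁻¹ Jᴴ`, the
matrix in question is `C = A⁻¹ - P`. Since `P A P = P`, expanding gives `C A C = C`, so the hermitian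
matrix `C = Cᴴ A C` is positive semidefinite whenever `A` is. -/

namespace Matrix

variable {n m o R : Type*}

section CommRing

variable [Fintype n] [Fintype m] [DecidableEq m] [CommRing R] [StarRing R]

theorem mul_inv_conjTranspose_mul_mul_mul_self (A : Matrix n n R) (J : Matrix n m R)
    (hB : IsUnit (Jᴴ * A * J).det) :
    J * (Jᴴ * A * J)⁻¹ * Jᴴ * A * (J * (Jᴴ * A * J)⁻¹ * Jᴴ) = J * (Jᴴ * A * J)⁻¹ * Jᴴ :=
  calc J * (Jᴴ * A * J)⁻¹ * Jᴴ * A * (J * (Jᴴ * A * J)⁻¹ * Jᴴ)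
      = J * ((Jᴴ * A * J)⁻¹ * (Jᴴ * A * J) * (Jᴴ * A * J)⁻¹) * Jᴴ := by
        simp only [Matrix.mul_assoc]
    _ = J * (Jᴴ * A * J)⁻¹ * Jᴴ := by rw [nonsing_inv_mul _ hB, Matrix.one_mul]

theorem PosSemidef.inv_sub_mul_inv_conjTranspose_mul_mul [DecidableEq n] [PartialOrder R]
    {A : Matrix n n R} (hA : A.PosSemidef) (hAdet : IsUnit A.det) (J : Matrix n m R)
    (hB : IsUnit (Jᴴ * A * J).det) :
    (A⁻¹ - J * (Jᴴ * A * J)⁻¹ * Jᴴ).PosSemidef := by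
  set P := J * (Jᴴ * A * J)⁻¹ * Jᴴ
  have hC : (A⁻¹ - P).IsHermitian :=
    hA.isHermitian.inv.sub <|
      isHermitian_mul_mul_conjTranspose J (isHermitian_conjTranspose_mul_mul J hA.isHermitian).inv
  have hPAP : P * A * P = P := mul_inv_conjTranspose_mul_mul_mul_self A J hB
  have hCAC : (A⁻¹ - P)ᴴ * A * (A⁻¹ - P) = A⁻¹ - P := by
    rw [hC.eq, Matrix.sub_mul, Matrix.sub_mul, Matrix.mul_sub, Matrix.mul_sub, hPAP,
      nonsing_inv_mul _ hAdet, Matrix.mul_assoc P, mul_nonsing_inv _ hAdet]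
    simp only [Matrix.one_mul, Matrix.mul_one]
    abel
  simpa only [hCAC] using hA.conjTranspose_mul_mul_same (A⁻¹ - P)

end CommRing

section Submatrix

variable [DecidableEq n]

theorem conjTranspose_one_submatrix_mul_mul_one_submatrix [Fintype n] [Semiring R] [StarRing R]
    (A : Matrix n n R) (e : m → n) :
    ((1 : Matrix n n R).submatrix id e)ᴴ * A * (1 : Matrix n n R).submatrix id e =
      A.submatrix e e := by
  ext
  simp [mul_apply, one_apply]

theorem one_submatrix_val_mul_apply [NonAssocSemiring R] {s : Finset n} (M : Matrix s o R)
    (i : n) (b : o) :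
    ((1 : Matrix n n R).submatrix id ((↑) : s → n) * M) i b =
      if h : i ∈ s then M ⟨i, h⟩ b else 0 := by
  split_ifs with h
  · rw [mul_apply, Fintype.sum_eq_single ⟨i, h⟩ fun a ha => ?_]
    · rw [submatrix_apply, id, one_apply_eq, one_mul]
    · rw [submatrix_apply, id, one_apply_ne fun hia => ha (Subtype.ext hia.symm), zero_mul]
  · refine (mul_apply ..).trans (Finset.sum_eq_zero fun a _ => ?_)
    rw [submatrix_apply, id, one_apply_ne fun hia : i = a => h (hia ▸ a.2), zero_mul]

theorem mul_one_submatrix_val_apply [NonAssocSemiring R] {s : Finset n} (M : Matrix o s R)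
    (a : o) (j : n) :
    (M * (1 : Matrix n n R).submatrix ((↑) : s → n) id) a j =
      if h : j ∈ s then M a ⟨j, h⟩ else 0 := by
  split_ifs with h
  · rw [mul_apply, Fintype.sum_eq_single ⟨j, h⟩ fun b hb => ?_]
    · rw [submatrix_apply, id, one_apply_eq, mul_one]
    · rw [submatrix_apply, id, one_apply_ne fun hbj => hb (Subtype.ext hbj), mul_zero]
  · refine (mul_apply ..).trans (Finset.sum_eq_zero fun b _ => ?_)
    rw [submatrix_apply, id, one_apply_ne fun hbj : (b : n) = j => h (hbj ▸ b.2), mul_zero]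

theorem one_submatrix_val_mul_mul_conjTranspose_apply [NonAssocSemiring R] [StarRing R]
    {s : Finset n} (M : Matrix s s R) (i j : n) :
    ((1 : Matrix n n R).submatrix id ((↑) : s → n) * M *
        ((1 : Matrix n n R).submatrix id ((↑) : s → n))ᴴ) i j =
      if h : i ∈ s ∧ j ∈ s then M ⟨i, h.1⟩ ⟨j, h.2⟩ else 0 := by
  rw [conjTranspose_submatrix, conjTranspose_one, mul_one_submatrix_val_apply]
  by_cases hj : j ∈ s <;> simp [hj, one_submatrix_val_mul_apply]

end Submatrix

end Matrix

open Matrix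

theorem stmt5 (N : ℕ) (A : Matrix (Fin N) (Fin N) ℝ) (hA : A.PosDef)
    (s : Finset (Fin N)) :
    Matrix.PosSemidef (Matrix.of fun i j : Fin N =>
      if h : i ∈ s ∧ j ∈ s then
        A⁻¹ i j -
          (A.submatrix ((↑) : {a // a ∈ s} → Fin N) ((↑) : {a // a ∈ s} → Fin N))⁻¹
            ⟨i, h.1⟩ ⟨j, h.2⟩
      else A⁻¹ i j) := by
  set J := (1 : Matrix (Fin N) (Fin N) ℝ).submatrix id ((↑) : s → Fin N)
  have hJAJ : Jᴴ * A * J = A.submatrix (↑) (↑) :=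
    conjTranspose_one_submatrix_mul_mul_one_submatrix A _
  have hB : IsUnit (Jᴴ * A * J).det := by
    rw [hJAJ]
    exact (hA.submatrix Subtype.val_injective).det_pos.ne'.isUnit
  refine Eq.mp (congrArg PosSemidef ?_)
    (hA.posSemidef.inv_sub_mul_inv_conjTranspose_mul_mul hA.det_pos.ne'.isUnit J hB)
  ext i j
  rw [Matrix.sub_apply, one_submatrix_val_mul_mul_conjTranspose_apply, hJAJ, of_apply]
  split_ifs
  · rfl
  · exact sub_zero _
end

section
/- Let K ≥ 1, t_1,…,t_K ≥ 0 with ∑ t_k = 1, λ > 0, and points x_1,…,x_K in ℝ². Define φ(x) = log ∑_{k=1}^K t_k/(1+λ²|x−x_k|²)². Then for almost every x ∈ ℝ² (namely for x distinct from all x_k), the gradient of φ satisfies |∇φ(x)| ≤ min{2λ, 4/min_k |x−x_k|}. -/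
/-!
Write `φ = log S` with `S = ∑ₖ tₖ gₖ⁻²` and `gₖ(y) = 1 + λ²‖y - xₖ‖²`. Then
`∇φ = S⁻¹ ∑ₖ tₖ gₖ⁻² · (-4λ² (y - xₖ) / gₖ)`, a weighted average of vectors of length
`4λ²r/(1 + λ²r²)` with `r = ‖y - xₖ‖`. By AM-GM this is at most `2λ`, and since
`λ²r² < 1 + λ²r²` it is at most `4/r ≤ 4/minₖ ‖y - xₖ‖`.
-/

open Finset

theorem four_mul_sq_mul_le_min_mul {lam r m : ℝ} (hlam : 0 ≤ lam) (hm : 0 < m) (hmr : m ≤ r) :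
    4 * lam ^ 2 * r ≤ min (2 * lam) (4 / m) * (1 + lam ^ 2 * r ^ 2) := by
  rw [min_mul_of_nonneg _ _ (by positivity)]
  refine le_min ?_ ?_
  · nlinarith [mul_nonneg hlam (sq_nonneg (1 - lam * r))]
  · rw [div_mul_eq_mul_div, le_div_iff₀ hm]
    nlinarith [mul_le_mul_of_nonneg_left hmr (mul_nonneg (sq_nonneg lam) (hm.le.trans hmr))]

section InnerProductSpace

variable {E : Type*} [NormedAddCommGroup E] [InnerProductSpace ℝ E]

theorem hasFDerivAt_div_one_add_mul_norm_sub_sq_sq (c : ℝ) {a : ℝ} (ha : 0 ≤ a) (p x : E) :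
    HasFDerivAt (fun y => c / (1 + a * ‖y - p‖ ^ 2) ^ 2)
      ((-(4 * c * a) / (1 + a * ‖x - p‖ ^ 2) ^ 3) • innerSL ℝ (x - p)) x := by
  have hg : 0 < 1 + a * ‖x - p‖ ^ 2 := by positivity
  have hinner : HasFDerivAt (fun y => 1 + a * ‖y - p‖ ^ 2)
      (a • (2 • (innerSL ℝ (x - p)).comp (ContinuousLinearMap.id ℝ E))) x :=
    ((((hasFDerivAt_id x).sub_const p).norm_sq).const_mul a).const_add 1
  have houter : HasDerivAt (fun u : ℝ => c / u ^ 2)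
      ((0 * (1 + a * ‖x - p‖ ^ 2) ^ 2 - c * (2 * (1 + a * ‖x - p‖ ^ 2) ^ 1)) /
        ((1 + a * ‖x - p‖ ^ 2) ^ 2) ^ 2) (1 + a * ‖x - p‖ ^ 2) :=
    (hasDerivAt_const _ c).div (hasDerivAt_pow 2 _) (by positivity)
  refine (houter.comp_hasFDerivAt x hinner).congr_fderiv ?_
  ext y
  simp only [FunLike.coe_smul, Pi.smul_apply, ContinuousLinearMap.comp_apply,
    ContinuousLinearMap.coe_id', id_eq, smul_eq_mul]
  field_simp
  ring

theorem norm_smul_innerSL_le_min_mul {c lam m : ℝ} (hc : 0 ≤ c) (hlam : 0 ≤ lam) (hm : 0 < m)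
    {v : E} (hmv : m ≤ ‖v‖) :
    ‖(-(4 * c * lam ^ 2) / (1 + lam ^ 2 * ‖v‖ ^ 2) ^ 3) • innerSL ℝ v‖ ≤
      min (2 * lam) (4 / m) * (c / (1 + lam ^ 2 * ‖v‖ ^ 2) ^ 2) := by
  have hg : 0 < 1 + lam ^ 2 * ‖v‖ ^ 2 := by positivity
  rw [norm_smul, innerSL_apply_norm, Real.norm_eq_abs, abs_div, abs_neg,
    abs_of_nonneg (by positivity : 0 ≤ 4 * c * lam ^ 2), abs_of_pos (by positivity)]
  calc 4 * c * lam ^ 2 / (1 + lam ^ 2 * ‖v‖ ^ 2) ^ 3 * ‖v‖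
      = c / (1 + lam ^ 2 * ‖v‖ ^ 2) ^ 2 * (4 * lam ^ 2 * ‖v‖ / (1 + lam ^ 2 * ‖v‖ ^ 2)) := by
        field_simp
    _ ≤ c / (1 + lam ^ 2 * ‖v‖ ^ 2) ^ 2 * min (2 * lam) (4 / m) := by
        gcongr
        exact (div_le_iff₀ hg).2 (four_mul_sq_mul_le_min_mul hlam hm hmv)
    _ = _ := mul_comm _ _

end InnerProductSpace

theorem norm_inv_sum_smul_sum_le {ι F : Type*} [NormedAddCommGroup F] [NormedSpace ℝ F]
    (s : Finset ι) (w : ι → ℝ) (v : ι → F) {B : ℝ} (hw : 0 < ∑ k ∈ s, w k)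
    (hv : ∀ k ∈ s, ‖v k‖ ≤ B * w k) :
    ‖(∑ k ∈ s, w k)⁻¹ • ∑ k ∈ s, v k‖ ≤ B := by
  rw [norm_smul, norm_inv, Real.norm_of_nonneg hw.le, inv_mul_le_iff₀ hw, mul_comm, mul_sum]
  exact (norm_sum_le _ _).trans (sum_le_sum hv)

theorem stmt10 (K : ℕ) (hK : 0 < K) (t : Fin K → ℝ) (ht : ∀ k, 0 ≤ t k)
    (hsum : ∑ k, t k = 1) (lam : ℝ) (hlam : 0 < lam)
    (x₀ : Fin K → EuclideanSpace ℝ (Fin 2)) :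
    ∀ x : EuclideanSpace ℝ (Fin 2), (∀ k, x ≠ x₀ k) →
      ‖gradient (fun y : EuclideanSpace ℝ (Fin 2) =>
          Real.log (∑ k, t k / (1 + lam ^ 2 * ‖y - x₀ k‖ ^ 2) ^ 2)) x‖ ≤
        min (2 * lam)
          (4 / Finset.univ.inf' (Finset.univ_nonempty_iff.mpr ⟨⟨0, hK⟩⟩)
            (fun k => ‖x - x₀ k‖)) := by
  intro x hx
  have hne : (univ : Finset (Fin K)).Nonempty := univ_nonempty_iff.mpr ⟨⟨0, hK⟩⟩
  obtain ⟨k₀, -, hk₀⟩ := exists_mem_eq_inf' hne (fun k => ‖x - x₀ k‖)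
  have hm : 0 < univ.inf' hne (fun k => ‖x - x₀ k‖) := hk₀ ▸ norm_sub_pos_iff.mpr (hx k₀)
  have hS : 0 < ∑ k, t k / (1 + lam ^ 2 * ‖x - x₀ k‖ ^ 2) ^ 2 := by
    obtain ⟨k, -, hk⟩ := exists_ne_zero_of_sum_ne_zero (hsum ▸ one_ne_zero)
    exact sum_pos' (fun j _ => by have := ht j; positivity)
      ⟨k, mem_univ k, by have := (ht k).lt_of_ne' hk; positivity⟩
  have hderiv := (HasFDerivAt.fun_sum fun k _ =>
    hasFDerivAt_div_one_add_mul_norm_sub_sq_sq (t k) (sq_nonneg lam) (x₀ k) x).log hS.ne'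
  rw [hderiv.hasGradientAt.gradient, LinearIsometryEquiv.norm_map]
  exact norm_inv_sum_smul_sum_le _ _ _ hS fun k _ =>
    norm_smul_innerSL_le_min_mul (ht k) hlam.le hm (inf'_le _ (mem_univ k))
end
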